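/- Let n ≥ 2 be an integer and define Δ(n) = |[n]₃| − ⌈log₃((n+1)(n+2)/2)⌉. Then: (i) Δ(n) = 0 for all 2 ≤ n ≤ 8; (ii) for n ≥ 9, Δ(n) = 0 if n ∈ [b_{2r}, 2·3^r) ∪ [b_{2r+1}, 3^{r+1}) for some r ∈ ℕ, and Δ(n) = 1 otherwise. -/

import Mathlib

/-- `[n]₃ = { j·3^k : j ∈ {1,2}, k ∈ ℕ, j·3^k ≤ n }`. -/
def bracket3 (n : ℕ) : Set ℕ :=
  {m | ∃ j ∈ ({1, 2} : Set ℕ), ∃ k : ℕ, m = j * 3 ^ k ∧ m ≤ n}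

/-- `b r = (-3 + √(8·3^r + 1))/2`. -/
noncomputable def b (r : ℕ) : ℝ := (-3 + Real.sqrt (8 * 3 ^ r + 1)) / 2

/-- `Δ n = #[n]₃ − ⌈log₃((n+1)(n+2)/2)⌉`. -/
noncomputable def Δ (n : ℕ) : ℤ :=
  ((bracket3 n).ncard : ℤ) - ⌈Real.logb 3 (((n : ℝ) + 1) * ((n : ℝ) + 2) / 2)⌉

/-!
Write `N = |[n]₃|`; it counts the terms `1, 2, 3, 6, 9, 18, …` of the sequence `3^k, 2·3^k` that are
at most `n`, so `N = 2s + 1` on `[3^s, 2·3^s)` and `N = 2s + 2` on `[2·3^s, 3^{s+1})`. On either range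
`T = (n+1)(n+2)/2` satisfies `3^{N-2} < T ≤ 3^N`, so `⌈log₃ T⌉ ∈ {N - 1, N}` and `Δ n ∈ {0, 1}`, with
`Δ n = 0` exactly when `3^{N-1} < T`. Since `(n+1)(n+2)` is never `2·3^k` for `n ≥ 2`, this is
`2·3^{N-1} ≤ (n+1)(n+2)`, i.e. `b_{N-1} ≤ n`. For `n ≥ 3` the only `r ≥ 1` that can put `n` into one
of the intervals `[b_{2r}, 2·3^r)`, `[b_{2r+1}, 3^{r+1})` is `r = ⌊log₃ n⌋`.
-/

lemma setOf_pow_le_eq_Iic {b n : ℕ} (hb : 1 < b) (hn : n ≠ 0) :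
    {k | b ^ k ≤ n} = Set.Iic (Nat.log b n) := by
  ext k
  exact (Nat.le_log_iff_pow_le hb hn).symm

lemma Nat.clog_eq_ite {b k x : ℕ} (hb : 1 < b) (h₁ : b ^ k < b * x) (h₂ : x ≤ b ^ (k + 1)) :
    Nat.clog b x = if b ^ k < x then k + 1 else k := by
  split_ifs with h
  · exact le_antisymm ((Nat.clog_le_iff_le_pow hb).2 h₂) ((Nat.lt_clog_iff_pow_lt hb).2 h)
  · refine le_antisymm ((Nat.clog_le_iff_le_pow hb).2 (not_lt.1 h)) (not_lt.1 fun hlt => ?_)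
    have : b * x ≤ b ^ k := calc
      b * x ≤ b * b ^ Nat.clog b x := Nat.mul_le_mul_left b (Nat.le_pow_clog hb x)
      _ = b ^ (Nat.clog b x + 1) := Nat.pow_succ'.symm
      _ ≤ b ^ k := Nat.pow_le_pow_right hb.le hlt
    omega

lemma two_mul_half_succ_mul_succ_succ (n : ℕ) : 2 * ((n + 1) * (n + 2) / 2) = (n + 1) * (n + 2) :=
  Nat.two_mul_div_two_of_even (Nat.even_mul_succ_self (n + 1))

lemma succ_mul_succ_succ_ne_two_mul_pow {n : ℕ} (hn : 2 ≤ n) (m : ℕ) :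
    (n + 1) * (n + 2) ≠ 2 * 3 ^ m := by
  have hfactor {a : ℕ} (ha : 3 ≤ a) (h3 : ¬ 3 ∣ a) : ¬ a ∣ 2 * 3 ^ m := fun hdvd =>
    have hcop : a.Coprime (3 ^ m) :=
      ((Nat.Prime.coprime_iff_not_dvd Nat.prime_three).2 h3).symm.pow_right m
    absurd (Nat.le_of_dvd two_pos (hcop.dvd_of_dvd_mul_right hdvd)) (by omega)
  intro h
  by_cases h3 : 3 ∣ n + 1
  · exact hfactor (by omega) (by omega) (h ▸ Dvd.intro_left _ rfl)
  · exact hfactor (by omega) h3 (h ▸ Dvd.intro _ rfl)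

lemma bracket3_eq_union (n : ℕ) :
    bracket3 n = (3 ^ ·) '' {k | 3 ^ k ≤ n} ∪ (2 * 3 ^ ·) '' {k | 3 ^ k ≤ n / 2} := by
  ext m
  simp only [bracket3, Set.mem_insert_iff, Set.mem_singleton_iff, Set.mem_union, Set.mem_image,
    Set.mem_ofPred_eq, Nat.le_div_iff_mul_le two_pos]
  constructor
  · rintro ⟨j, rfl | rfl, k, rfl, hk⟩
    · exact Or.inl ⟨k, by simpa using hk, by simp⟩
    · exact Or.inr ⟨k, by linarith, rfl⟩
  · rintro (⟨k, hk, rfl⟩ | ⟨k, hk, rfl⟩)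
    · exact ⟨1, Or.inl rfl, k, by simp, hk⟩
    · exact ⟨2, Or.inr rfl, k, rfl, by linarith⟩

lemma ncard_bracket3 {n : ℕ} (hn : 2 ≤ n) :
    (bracket3 n).ncard = Nat.log 3 n + Nat.log 3 (n / 2) + 2 := by
  have hdisj (s t : Set ℕ) : Disjoint ((3 ^ ·) '' s) ((2 * 3 ^ ·) '' t) := by
    refine Set.disjoint_left.mpr ?_
    rintro _ ⟨a, -, rfl⟩ ⟨c, -, hc : 2 * 3 ^ c = 3 ^ a⟩
    have h3a : Odd (3 ^ a) := Odd.pow (by decide)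
    exact Nat.not_odd_iff_even.mpr (hc ▸ even_two_mul _) h3a
  rw [bracket3_eq_union, setOf_pow_le_eq_Iic (by norm_num) (by omega),
    setOf_pow_le_eq_Iic (by norm_num) (by omega), Set.ncard_union_eq (hdisj _ _),
    Set.ncard_image_of_injective _ (Nat.pow_right_injective (by norm_num : 2 ≤ 3)),
    Set.ncard_image_of_injective (f := fun k => 2 * 3 ^ k) _
      ((mul_right_injective₀ two_ne_zero).comp (Nat.pow_right_injective (by norm_num : 2 ≤ 3))),
    Set.ncard_Iic_nat, Set.ncard_Iic_nat]
  ring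

lemma ceil_logb_three_eq_clog (n : ℕ) :
    ⌈Real.logb 3 (((n : ℝ) + 1) * ((n : ℝ) + 2) / 2)⌉ = Nat.clog 3 ((n + 1) * (n + 2) / 2) := by
  have hcast : ((n : ℝ) + 1) * ((n : ℝ) + 2) / 2 = (((n + 1) * (n + 2) / 2 : ℕ) : ℝ) := by
    rw [Nat.cast_div_charZero (Nat.even_mul_succ_self (n + 1)).two_dvd]
    push_cast
    ring
  rw [hcast, show (3 : ℝ) = ((3 : ℕ) : ℝ) by norm_num, Real.ceil_logb_natCast (Nat.cast_nonneg _),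
    Int.clog_natCast]

lemma Δ_eq {n : ℕ} (hn : 2 ≤ n) :
    Δ n = ((Nat.log 3 n + Nat.log 3 (n / 2) + 2 : ℕ) : ℤ) - Nat.clog 3 ((n + 1) * (n + 2) / 2) := by
  rw [Δ, ncard_bracket3 hn, ceil_logb_three_eq_clog]

-- `b r` is the positive root of `(x + 1) * (x + 2) = 2 * 3 ^ r`.
lemma b_le_iff {r n : ℕ} : b r ≤ n ↔ 2 * 3 ^ r ≤ (n + 1) * (n + 2) := by
  have hsqrt : b r ≤ n ↔ Real.sqrt (8 * 3 ^ r + 1) ≤ 2 * n + 3 := by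
    rw [b, div_le_iff₀ two_pos]
    constructor <;> intro h <;> linarith
  rw [hsqrt, Real.sqrt_le_left (by positivity), ← Nat.cast_le (α := ℝ)]
  push_cast
  constructor <;> intro h <;> nlinarith

lemma b_le_iff_pow_lt {r n : ℕ} (hn : 2 ≤ n) : b r ≤ n ↔ 3 ^ r < (n + 1) * (n + 2) / 2 := by
  have := two_mul_half_succ_mul_succ_succ n
  have := succ_mul_succ_succ_ne_two_mul_pow hn r
  rw [b_le_iff]
  omega

lemma Δ_of_pow_le_of_lt_two_mul_pow {n s : ℕ} (hs : 0 < s) (h₁ : 3 ^ s ≤ n) (h₂ : n < 2 * 3 ^ s) :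
    Δ n = if b (2 * s) ≤ n then 0 else 1 := by
  obtain ⟨t, rfl⟩ : ∃ t, s = t + 1 := ⟨s - 1, by omega⟩
  have hx : 1 ≤ 3 ^ t := Nat.one_le_pow _ _ three_pos
  rw [pow_succ] at h₁ h₂
  have hlog : Nat.log 3 n = t + 1 :=
    Nat.log_eq_of_pow_le_of_lt_pow (by rw [pow_succ]; omega) (by rw [pow_succ, pow_succ]; omega)
  have hlog2 : Nat.log 3 (n / 2) = t :=
    Nat.log_eq_of_pow_le_of_lt_pow (by omega) (by rw [pow_succ]; omega)
  have hT := two_mul_half_succ_mul_succ_succ n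
  have hclog : Nat.clog 3 ((n + 1) * (n + 2) / 2) =
      if 3 ^ (2 * (t + 1)) < (n + 1) * (n + 2) / 2 then 2 * (t + 1) + 1 else 2 * (t + 1) := by
    have hsq : 3 ^ (2 * (t + 1)) = 9 * (3 ^ t * 3 ^ t) := by ring
    refine Nat.clog_eq_ite (by norm_num) ?_ ?_
    · rw [hsq]; nlinarith
    · rw [pow_succ, hsq]; nlinarith
  rw [Δ_eq (by omega), hlog, hlog2, hclog]
  simp only [b_le_iff_pow_lt (show 2 ≤ n by omega)]
  split_ifs <;> omega

lemma Δ_of_two_mul_pow_le_of_lt_pow {n s : ℕ} (h₁ : 2 * 3 ^ s ≤ n) (h₂ : n < 3 ^ (s + 1)) :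
    Δ n = if b (2 * s + 1) ≤ n then 0 else 1 := by
  have hx : 1 ≤ 3 ^ s := Nat.one_le_pow _ _ three_pos
  have hlog : Nat.log 3 n = s := Nat.log_eq_of_pow_le_of_lt_pow (by omega) h₂
  rw [pow_succ] at h₂
  have hlog2 : Nat.log 3 (n / 2) = s :=
    Nat.log_eq_of_pow_le_of_lt_pow (by omega) (by rw [pow_succ]; omega)
  have hT := two_mul_half_succ_mul_succ_succ n
  have hclog : Nat.clog 3 ((n + 1) * (n + 2) / 2) =
      if 3 ^ (2 * s + 1) < (n + 1) * (n + 2) / 2 then 2 * s + 2 else 2 * s + 1 := by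
    have hsq : 3 ^ (2 * s) = 3 ^ s * 3 ^ s := by ring
    refine Nat.clog_eq_ite (by norm_num) ?_ ?_
    · rw [pow_succ, hsq]; nlinarith
    · rw [pow_succ, pow_succ, hsq]; nlinarith
  rw [Δ_eq (by omega), hlog, hlog2, hclog]
  simp only [b_le_iff_pow_lt (show 2 ≤ n by omega)]
  split_ifs <;> omega

lemma pow_le_of_b_two_mul_le {r n : ℕ} (hr : 0 < r) (h : b (2 * r) ≤ n) : 3 ^ r ≤ n := by
  have h3 : 3 ≤ 3 ^ r := Nat.le_self_pow hr.ne' 3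
  have hsq : 3 ^ (2 * r) = 3 ^ r * 3 ^ r := by ring
  rw [b_le_iff, hsq] at h
  by_contra! hlt
  nlinarith

lemma two_mul_pow_le_of_b_two_mul_add_one_le {r n : ℕ} (hr : 0 < r) (h : b (2 * r + 1) ≤ n) :
    2 * 3 ^ r ≤ n := by
  have h3 : 3 ≤ 3 ^ r := Nat.le_self_pow hr.ne' 3
  have hsq : 3 ^ (2 * r + 1) = 3 * (3 ^ r * 3 ^ r) := by ring
  rw [b_le_iff, hsq] at h
  by_contra! hlt
  nlinarith

/-- The set `⋃_{r ≥ 1} [b_{2r}, 2·3^r) ∪ [b_{2r+1}, 3^{r+1})` of part (ii). -/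
def optimalRange : Set ℕ :=
  {n | ∃ r : ℕ, 1 ≤ r ∧
    ((b (2 * r) ≤ (n : ℝ) ∧ (n : ℝ) < 2 * 3 ^ r) ∨
      (b (2 * r + 1) ≤ (n : ℝ) ∧ (n : ℝ) < 3 ^ (r + 1)))}

lemma mem_optimalRange_iff {n : ℕ} (hn : 3 ≤ n) :
    n ∈ optimalRange ↔
      (n < 2 * 3 ^ Nat.log 3 n ∧ b (2 * Nat.log 3 n) ≤ n) ∨
        (2 * 3 ^ Nat.log 3 n ≤ n ∧ b (2 * Nat.log 3 n + 1) ≤ n) := by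
  have hs : 1 ≤ Nat.log 3 n := Nat.le_log_of_pow_le (by norm_num) hn
  have hlt := Nat.lt_pow_succ_log_self (by norm_num : 1 < 3) n
  constructor
  · rintro ⟨r, hr, ⟨hb, hlt'⟩ | ⟨hb, hlt'⟩⟩
    · have h₂ : n < 2 * 3 ^ r := by exact_mod_cast hlt'
      obtain rfl : Nat.log 3 n = r :=
        Nat.log_eq_of_pow_le_of_lt_pow (pow_le_of_b_two_mul_le hr hb) (by rw [pow_succ]; omega)
      exact Or.inl ⟨h₂, hb⟩
    · have h₂ : n < 3 ^ (r + 1) := by exact_mod_cast hlt'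
      have h₁ := two_mul_pow_le_of_b_two_mul_add_one_le hr hb
      obtain rfl : Nat.log 3 n = r := Nat.log_eq_of_pow_le_of_lt_pow (by omega) h₂
      exact Or.inr ⟨h₁, hb⟩
  · rintro (⟨h₂, hb⟩ | ⟨h₂, hb⟩)
    · exact ⟨_, hs, Or.inl ⟨hb, by exact_mod_cast h₂⟩⟩
    · exact ⟨_, hs, Or.inr ⟨hb, by exact_mod_cast hlt⟩⟩

open Classical in
lemma Δ_eq_ite {n : ℕ} (hn : 3 ≤ n) : Δ n = if n ∈ optimalRange then 0 else 1 := by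
  have hs : 0 < Nat.log 3 n := Nat.log_pos (by norm_num) hn
  have h₁ : 3 ^ Nat.log 3 n ≤ n := Nat.pow_log_le_self 3 (by omega)
  have h₂ : n < 3 ^ (Nat.log 3 n + 1) := Nat.lt_pow_succ_log_self (by norm_num) n
  rw [mem_optimalRange_iff hn]
  rcases lt_or_ge n (2 * 3 ^ Nat.log 3 n) with h | h
  · simp [Δ_of_pow_le_of_lt_two_mul_pow hs h₁ h, h, not_le.2 h]
  · simp [Δ_of_two_mul_pow_le_of_lt_pow h h₂, h, not_lt.2 h]

theorem stmt_7 :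
    (∀ n : ℕ, 2 ≤ n → n ≤ 8 → Δ n = 0) ∧
    (∀ n : ℕ, 9 ≤ n →
      ((∃ r : ℕ, 1 ≤ r ∧
          ((b (2 * r) ≤ (n : ℝ) ∧ (n : ℝ) < 2 * 3 ^ r) ∨
           (b (2 * r + 1) ≤ (n : ℝ) ∧ (n : ℝ) < 3 ^ (r + 1)))) → Δ n = 0) ∧
      ((¬ ∃ r : ℕ, 1 ≤ r ∧
          ((b (2 * r) ≤ (n : ℝ) ∧ (n : ℝ) < 2 * 3 ^ r) ∨
           (b (2 * r + 1) ≤ (n : ℝ) ∧ (n : ℝ) < 3 ^ (r + 1)))) → Δ n = 1)) := by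
  refine ⟨fun n h₂ h₈ => ?_, fun n h₉ => ⟨fun h => ?_, fun h => ?_⟩⟩
  · obtain rfl | ⟨h₃, h₅⟩ | h₆ : n = 2 ∨ (3 ≤ n ∧ n ≤ 5) ∨ 6 ≤ n := by omega
    · rw [Δ_of_two_mul_pow_le_of_lt_pow (n := 2) (s := 0) le_rfl (by norm_num),
        if_pos (b_le_iff.2 (by norm_num))]
    · rw [Δ_of_pow_le_of_lt_two_mul_pow (s := 1) one_pos h₃ (by omega),
        if_pos (b_le_iff.2 (by norm_num; nlinarith))]
    · rw [Δ_of_two_mul_pow_le_of_lt_pow (s := 1) h₆ (by omega),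
        if_pos (b_le_iff.2 (by norm_num; nlinarith))]
  · rw [Δ_eq_ite (by omega)]; exact if_pos h
  · rw [Δ_eq_ite (by omega)]; exact if_neg h
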